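/- arXiv:math/0304171 — 9 statements merged into one kernel-verified Lean document; each statement's English description precedes it below -/
import Mathlib

section
/- If f and g are Plott functions on a finite set X (choice functions satisfying f(A∪B)=f(f(A)∪B) for all A,B⊆X), then the function f∪g defined by (f∪g)(A)=f(A)∪g(A) is also a Plott function. -/
open Set

variable {X Y Z : Type*}

/-- A choice function: `f A ⊆ A` for all `A`. -/
def IsChoice (f : Set X → Set X) : Prop := ∀ A, f A ⊆ A

/-- A Plott function: choice function satisfying path independence. -/
def IsPlott (f : Set X → Set X) : Prop :=
  IsChoice f ∧ ∀ A B : Set X, f (A ∪ B) = f (f A ∪ B)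

/-- Outcast property of Plott functions. -/
lemma plott_outcast {f : Set X → Set X} (hf : IsPlott f) {A B : Set X}
    (h1 : f B ⊆ A) (h2 : A ⊆ B) : f A = f B := by
  have key := hf.2 B A
  rw [union_eq_self_of_subset_right h2, union_eq_self_of_subset_left h1] at key
  exact key.symm

/-- the pointwise union of two Plott functions is a Plott function. -/
theorem plott_union {X : Type*} [Fintype X] (f g : Set X → Set X)
    (hf : IsPlott f) (hg : IsPlott g) :
    IsPlott (fun A => f A ∪ g A) := by
  refine ⟨fun A => union_subset (hf.1 A) (hg.1 A), fun A B => ?_⟩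
  simp only
  set C : Set X := (f A ∪ g A) ∪ B with hC
  have hCsub : C ⊆ A ∪ B :=
    union_subset (union_subset ((hf.1 A).trans subset_union_left)
      ((hg.1 A).trans subset_union_left)) subset_union_right
  have hfsub : f (A ∪ B) ⊆ C := by
    rw [hf.2 A B]
    exact (hf.1 _).trans (union_subset_union_left B subset_union_left)
  have hgsub : g (A ∪ B) ⊆ C := by
    rw [hg.2 A B]
    exact (hg.1 _).trans (union_subset_union_left B subset_union_right)
  rw [plott_outcast hf hfsub hCsub, plott_outcast hg hgsub hCsub]
end

section
/- Let R be a partial order on a finite set X. Then the choice function f_R defined by f_R(A) = {maximal elements of A with respect to R} satisfies the path independence condition f_R(A∪B) = f_R(f_R(A)∪B) for all A,B ⊆ X. -/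
/-!
Every element of a finite set `A` lies below a maximal element of `A`, so `Max A` is cofinal in
`A`. Replacing `A` by a cofinal subset does not change the maximal elements of `A ∪ B`: a maximal
element lying in `A` is already in the subset, and an element of `A` above a candidate is dominated
by an element of the subset.
-/

open Set

variable {X Y Z : Type*}

section PartialOrder

variable {α : Type*} [PartialOrder α]

theorem maximal_union_iff_of_cofinal {A A' B : Set α} (hA' : A' ⊆ A)
    (hcofinal : ∀ a ∈ A, ∃ c ∈ A', a ≤ c) {x : α} :
    Maximal (· ∈ A ∪ B) x ↔ Maximal (· ∈ A' ∪ B) x := by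
  constructor
  · intro hx
    refine hx.mono (union_subset_union_left B hA') ?_
    rcases hx.prop with hxA | hxB
    · obtain ⟨c, hcA', hxc⟩ := hcofinal x hxA
      have hcx : c ≤ x := hx.2 (Or.inl (hA' hcA')) hxc
      exact Or.inl (le_antisymm hxc hcx ▸ hcA')
    · exact Or.inr hxB
  · intro hx
    refine ⟨union_subset_union_left B hA' hx.prop, fun y hy hxy => ?_⟩
    rcases hy with hyA | hyB
    · obtain ⟨c, hcA', hyc⟩ := hcofinal y hyA
      exact hyc.trans (hx.2 (Or.inl hcA') (hxy.trans hyc))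
    · exact hx.2 (Or.inr hyB) hxy

theorem Set.Finite.maximal_union_iff_maximal_setOf_maximal_union {A : Set α} (hA : A.Finite)
    (B : Set α) {x : α} :
    Maximal (· ∈ A ∪ B) x ↔ Maximal (· ∈ {a | Maximal (· ∈ A) a} ∪ B) x :=
  maximal_union_iff_of_cofinal (fun _ ha => Maximal.prop ha) fun _ ha =>
    let ⟨c, hac, hc⟩ := hA.exists_le_maximal ha
    ⟨c, hc, hac⟩

end PartialOrder

/-- maximization of a partial order satisfies path independence. -/
theorem partialOrder_max_path_independent {X : Type*} [Fintype X]
    (r : X → X → Prop) (hr : IsPartialOrder X r)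
    (f : Set X → Set X)
    (hdef : ∀ A : Set X, f A = {a ∈ A | ∀ b ∈ A, r a b → a = b}) :
    ∀ A B : Set X, f (A ∪ B) = f (f A ∪ B) := by
  let : PartialOrder X :=
    { le := r, le_refl := hr.refl, le_trans := hr.trans, le_antisymm := hr.antisymm }
  have hf : ∀ A, f A = {a | Maximal (· ∈ A) a} := fun A => by
    rw [hdef]
    ext a
    exact maximal_mem_iff.symm
  intro A B
  ext x
  rw [hf, hf, hf]
  exact (Set.toFinite A).maximal_union_iff_maximal_setOf_maximal_union B
end

section
/- Let f be a Plott function on a finite set X and let S = supp(f) = {x ∈ X : f({x}) = {x}} be its support. Then for every A ⊆ X, f(A) = f(A ∩ S). -/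
open Set

variable {X Y Z : Type*}

/-! Path independence applied to `{x} ∪ B` shows that an element outside the support can be
added to or removed from any menu without changing the choice. Since `X` is finite, the
elements of `A` outside the support can be removed one at a time. -/

theorem union_eq_of_forall_insert_eq {g : Set X → Set X} {T : Set X} (hT : T.Finite)
    (hg : ∀ x ∈ T, ∀ B, g (insert x B) = g B) (B : Set X) : g (T ∪ B) = g B := by
  induction T, hT using Set.Finite.induction_on with
  | empty => rw [empty_union]
  | @insert x T _ _ ih =>
    rw [insert_union, hg x (mem_insert x T), ih fun y hy ↦ hg y (mem_insert_of_mem x hy)]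

namespace IsPlott

variable {f : Set X → Set X}

theorem singleton_eq_empty_of_ne (hf : IsPlott f) {x : X} (hx : f {x} ≠ {x}) : f {x} = ∅ :=
  (subset_singleton_iff_eq.mp (hf.1 {x})).resolve_right hx

theorem insert_eq_of_singleton_ne (hf : IsPlott f) {x : X} (hx : f {x} ≠ {x}) (B : Set X) :
    f (insert x B) = f B := by
  rw [← singleton_union, hf.2, hf.singleton_eq_empty_of_ne hx, empty_union]

end IsPlott

/-- a Plott function only depends on the intersection with its support. -/
theorem plott_support {X : Type*} [Fintype X] (f : Set X → Set X)
    (hf : IsPlott f) :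
    ∀ A : Set X, f A = f (A ∩ {x | f {x} = {x}}) := by
  intro A
  conv_lhs => rw [← sdiff_union_inter A {x | f {x} = {x}}]
  exact union_eq_of_forall_insert_eq (toFinite _)
    (fun x hx ↦ hf.insert_eq_of_singleton_ne hx.2) _
end

section
/- Every singleton-valued Plott function with nonempty values is the maximization choice function of a linear order: if f is a Plott function on a finite set X with |f(A)| = 1 for every nonempty A ⊆ X, then there exists a linear order ≤ on X such that f(A) = {max of A with respect to ≤} for all nonempty A. -/
open Set

variable {X Y Z : Type*}

/-- a singleton-valued Plott function is maximization of a linear order. -/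
theorem singleton_valued_plott_is_linear_order_max {X : Type*} [Fintype X]
    (f : Set X → Set X) (hf : IsPlott f)
    (hsingle : ∀ A : Set X, A.Nonempty → (f A).ncard = 1) :
    ∃ r : X → X → Prop, IsLinearOrder X r ∧
      ∀ A : Set X, A.Nonempty → f A = {a ∈ A | ∀ b ∈ A, r b a} := by
  obtain ⟨hc, hpi⟩ := hf
  -- pairs: f {a,b} is {a} or {b}
  have hpair : ∀ a b : X, f {a, b} = {a} ∨ f {a, b} = {b} := by
    intro a b
    obtain ⟨c, hcx⟩ := Set.ncard_eq_one.mp (hsingle {a, b} ⟨a, by simp⟩)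
    have hsub := hc {a, b}
    rw [hcx] at hsub
    rcases hsub rfl with h | h
    · left; rw [hcx, h]
    · right; rw [hcx, h]
  -- key: if f A = {m} and b ∈ A then f {b, m} = {m}
  have hkey : ∀ (A : Set X) (m b : X), f A = {m} → b ∈ A → f {b, m} = {m} := by
    intro A m b hA hb
    have hm : m ∈ A := hc A (by rw [hA]; rfl)
    have h1 : A ∪ {b, m} = A := by
      apply Set.union_eq_self_of_subset_right
      intro x hx; rcases hx with h | h
      · simpa [h] using hb
      · simp only [Set.mem_singleton_iff] at h; simpa [h] using hm
    have h2 : f A ∪ ({b, m} : Set X) = {b, m} := by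
      rw [hA]; ext x; simp
    have := hpi A {b, m}
    rw [h1, h2] at this
    rw [← this, hA]
  -- the relation: r a b ↔ b wins in {a, b}
  refine ⟨fun a b => f {a, b} = {b}, ?_, ?_⟩
  · refine { refl := ?_, trans := ?_, antisymm := ?_, total := ?_ }
    · -- refl
      intro a
      obtain ⟨c, hcx⟩ := Set.ncard_eq_one.mp (hsingle {a, a} ⟨a, by simp⟩)
      have := hc {a, a}
      rw [hcx] at this
      have hca : c = a := by simpa using this rfl
      rw [hcx, hca]
    · -- trans
      intro a b c hab hbc
      by_cases hbceq : b = c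
      · subst hbceq; exact hab
      by_cases habeq : a = b
      · subst habeq; exact hbc
      have habc : ({a, b} : Set X) ∪ {c} = ({a, c} : Set X) ∪ {b} := by
        ext x; simp; tauto
      have h1 := hpi {a, b} {c}
      have h2 := hpi {a, c} {b}
      rw [habc] at h1
      rw [h1] at h2
      rw [hab] at h2
      have hbc' : ({b} : Set X) ∪ {c} = {b, c} := by ext x; simp; tauto
      rw [hbc', hbc] at h2
      rcases hpair a c with h | h
      · rw [h] at h2
        have hac : ({a} : Set X) ∪ {b} = {a, b} := by ext x; simp; tauto
        rw [hac, hab] at h2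
        exact absurd (Set.singleton_eq_singleton_iff.mp h2.symm) hbceq
      · exact h
    · -- antisymm
      intro a b hab hba
      have : ({b, a} : Set X) = {a, b} := by ext x; simp; tauto
      rw [this, hab] at hba
      exact (Set.singleton_eq_singleton_iff.mp hba).symm
    · -- total
      intro a b
      have : ({b, a} : Set X) = {a, b} := by ext x; simp; tauto
      rcases hpair a b with h | h
      · right; rw [this]; exact h
      · left; exact h
  · -- maximization
    intro A hA
    obtain ⟨m, hm⟩ := Set.ncard_eq_one.mp (hsingle A hA)
    have hmA : m ∈ A := hc A (by rw [hm]; rfl)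
    rw [hm]
    ext x
    simp only [Set.mem_singleton_iff, Set.mem_setOf_eq]
    constructor
    · rintro rfl
      exact ⟨hmA, fun b hb => hkey A x b hm hb⟩
    · rintro ⟨hxA, hmax⟩
      have h1 : f {x, m} = {m} := hkey A m x hm hxA
      have h2 : f {m, x} = {x} := hmax m hmA
      have : ({m, x} : Set X) = {x, m} := by ext y; simp; tauto
      rw [this, h1] at h2
      exact Set.singleton_eq_singleton_iff.mp h2.symm
end

section
/- Let (≤_i)_{i∈I} be a finite family of linear orders on a finite set X. The joint-extremal choice function f(A) = ⋃_{i∈I} {max of A w.r.t. ≤_i} (for nonempty A, with f(∅)=∅) is a Plott function. -/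
open Set

variable {X Y Z : Type*}

/-- A finite nonempty set has a maximum w.r.t. a total transitive relation. -/
lemma exists_top_of_finset {X : Type*} (r : X → X → Prop)
    (htot : ∀ a b, r a b ∨ r b a) (htr : ∀ a b c, r a b → r b c → r a c)
    (s : Finset X) (hs : s.Nonempty) : ∃ m ∈ s, ∀ b ∈ s, r b m := by
  classical
  induction s using Finset.induction with
  | empty => simp at hs
  | @insert a s ha ih =>
    rcases s.eq_empty_or_nonempty with rfl | hsn
    · exact ⟨a, by simp, by
        intro b hb; simp at hb; subst hb
        rcases htot b b with h | h <;> exact h⟩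
    · obtain ⟨m, hm, hmax⟩ := ih hsn
      rcases htot a m with h | h
      · exact ⟨m, Finset.mem_insert_of_mem hm, by
          intro b hb
          rcases Finset.mem_insert.1 hb with rfl | hb
          · exact h
          · exact hmax b hb⟩
      · exact ⟨a, Finset.mem_insert_self _ _, by
          intro b hb
          rcases Finset.mem_insert.1 hb with rfl | hb
          · rcases htot b b with h' | h' <;> exact h'
          · exact htr b m a (hmax b hb) h⟩

/-- joint-extremal choice from a family of linear orders is a Plott function. -/
theorem joint_extremal_is_plott {X : Type*} [Fintype X] {I : Type*} [Fintype I]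
    (r : I → X → X → Prop) (hr : ∀ i, IsLinearOrder X (r i))
    (f : Set X → Set X)
    (hdef : ∀ A : Set X, f A = {a ∈ A | ∃ i : I, ∀ b ∈ A, r i b a}) :
    IsPlott f := by
  classical
  have hchoice : IsChoice f := by
    intro A a ha
    rw [hdef] at ha
    exact ha.1
  refine ⟨hchoice, fun A B => ?_⟩
  have htot : ∀ i (a b : X), r i a b ∨ r i b a := fun i a b => (hr i).total a b
  have htr : ∀ i (a b c : X), r i a b → r i b c → r i a c :=
    fun i a b c h1 h2 => (hr i).trans a b c h1 h2
  ext a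
  rw [hdef, hdef]
  constructor
  · rintro ⟨hab, i, hi⟩
    refine ⟨?_, i, fun b hb => hi b ?_⟩
    · rcases hab with hA | hB
      · left
        rw [hdef]
        exact ⟨hA, i, fun b hb => hi b (Or.inl hb)⟩
      · exact Or.inr hB
    · rcases hb with hfa | hB
      · exact Or.inl (hchoice A hfa)
      · exact Or.inr hB
  · rintro ⟨hab, i, hi⟩
    have hab' : a ∈ A ∪ B := by
      rcases hab with hfa | hB
      · exact Or.inl (hchoice A hfa)
      · exact Or.inr hB
    refine ⟨hab', i, fun b hb => ?_⟩
    rcases hb with hA | hB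
    · -- b ∈ A: find max of A w.r.t. r i, it's in f A
      have hAne : A.Nonempty := ⟨b, hA⟩
      have hfin : A.Finite := A.toFinite
      obtain ⟨m, hm, hmax⟩ := exists_top_of_finset (r i) (htot i) (htr i)
        hfin.toFinset (hfin.toFinset_nonempty.2 hAne)
      rw [Set.Finite.mem_toFinset] at hm
      have hmA : ∀ c ∈ A, r i c m := fun c hc =>
        hmax c (hfin.mem_toFinset.2 hc)
      have hmfA : m ∈ f A := by
        rw [hdef]; exact ⟨hm, i, hmA⟩
      exact htr i b m a (hmA b hA) (hi m (Or.inl hmfA))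
    · exact hi b (Or.inr hB)
end

section
/- In a convex geometry F on a finite set X, any two consecutive members of a maximal chain of closed sets differ by exactly one element: if F, G ∈ F with G ⊊ F and no closed set lies strictly between them, then |F \ G| = 1. -/
open Set

/-
An extreme point `a` of `F` lies outside some closed set `K ⊇ F \ {a}`, so `K ∩ F` is a closed
set squeezed between `F \ {a}` and `F`; if `G ⊂ F` are adjacent and `a ∉ G`, adjacency forces
`K ∩ F = G`, whence `F \ G = {a}`. Such an extreme point exists by the Minkowski–Krein–Milman
property: if all extreme points of `F` lay in `G`, then `F ⊆ cl(ext F) ⊆ G`.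
-/

variable {X Y Z : Type*}

/-- Closure in a family of sets: intersection of all members containing `A`. -/
def closureOf (𝓕 : Set (Set X)) (A : Set X) : Set X := ⋂₀ {F | F ∈ 𝓕 ∧ A ⊆ F}

/-- Extreme points of `A` with respect to the closure system `𝓕`. -/
def extPts (𝓕 : Set (Set X)) (A : Set X) : Set X :=
  {a ∈ A | a ∉ closureOf 𝓕 (A \ {a})}

/-- Convex geometry: contains `univ`, closed under intersection, MKM property. -/
def IsConvexGeometry (𝓕 : Set (Set X)) : Prop :=
  Set.univ ∈ 𝓕 ∧ (∀ F ∈ 𝓕, ∀ G ∈ 𝓕, F ∩ G ∈ 𝓕) ∧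
    ∀ A : Set X, closureOf 𝓕 A = closureOf 𝓕 (extPts 𝓕 A)

section ClosureOf

variable {𝓕 : Set (Set X)} {A K : Set X} {a : X}

lemma subset_closureOf : A ⊆ closureOf 𝓕 A :=
  fun _ hx _ hK => hK.2 hx

lemma closureOf_subset (hK : K ∈ 𝓕) (hAK : A ⊆ K) : closureOf 𝓕 A ⊆ K :=
  sInter_subset_of_mem ⟨hK, hAK⟩

lemma exists_mem_not_mem_of_not_mem_closureOf (ha : a ∉ closureOf 𝓕 A) :
    ∃ K ∈ 𝓕, A ⊆ K ∧ a ∉ K := by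
  simpa [closureOf, mem_sInter, and_assoc] using ha

end ClosureOf

variable {𝓕 : Set (Set X)} {F G : Set X}

lemma IsConvexGeometry.exists_mem_extPts_not_mem (h𝓕 : IsConvexGeometry 𝓕) (hG : G ∈ 𝓕)
    (hFG : ¬ F ⊆ G) : ∃ a ∈ extPts 𝓕 F, a ∉ G := by
  by_contra! hext
  apply hFG
  calc F ⊆ closureOf 𝓕 F := subset_closureOf
    _ = closureOf 𝓕 (extPts 𝓕 F) := h𝓕.2.2 F
    _ ⊆ G := closureOf_subset hG hext

lemma diff_eq_singleton_of_mem_extPts_of_not_mem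
    (hinter : ∀ K ∈ 𝓕, ∀ L ∈ 𝓕, K ∩ L ∈ 𝓕) (hF : F ∈ 𝓕) (hGF : G ⊂ F)
    (hadj : ¬ ∃ H ∈ 𝓕, G ⊂ H ∧ H ⊂ F) {a : X} (ha : a ∈ extPts 𝓕 F) (haG : a ∉ G) :
    F \ G = {a} := by
  obtain ⟨K, hK, hFK, haK⟩ := exists_mem_not_mem_of_not_mem_closureOf ha.2
  have hGK : G ⊆ K ∩ F := fun x hx =>
    ⟨hFK ⟨hGF.1 hx, fun hxa => haG (hxa ▸ hx)⟩, hGF.1 hx⟩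
  have hKF : K ∩ F ⊂ F := ssubset_of_subset_not_subset inter_subset_right
    fun h => haK (h ha.1).1
  have hGeq : K ∩ F = G := by
    by_contra hne
    exact hadj ⟨K ∩ F, hinter K hK F hF, hGK.ssubset_of_ne (Ne.symm hne), hKF⟩
  refine Subset.antisymm (fun x hx => ?_) (singleton_subset_iff.2 ⟨ha.1, haG⟩)
  by_contra hxa
  exact hx.2 (hGeq ▸ ⟨hFK ⟨hx.1, hxa⟩, hx.1⟩)

theorem convexGeometry_adjacent_diff_singleton_general {X : Type*}
    (𝓕 : Set (Set X)) (h𝓕 : IsConvexGeometry 𝓕)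
    (F G : Set X) (hF : F ∈ 𝓕) (hG : G ∈ 𝓕) (hGF : G ⊂ F)
    (hadj : ¬ ∃ H ∈ 𝓕, G ⊂ H ∧ H ⊂ F) :
    (F \ G).ncard = 1 := by
  obtain ⟨a, ha, haG⟩ := h𝓕.exists_mem_extPts_not_mem hG hGF.2
  rw [diff_eq_singleton_of_mem_extPts_of_not_mem h𝓕.2.1 hF hGF hadj ha haG, ncard_singleton]

/-- adjacent closed sets in a convex geometry differ by one element. -/
theorem convexGeometry_adjacent_diff_singleton {X : Type*} [Fintype X]
    (𝓕 : Set (Set X)) (h𝓕 : IsConvexGeometry 𝓕)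
    (F G : Set X) (hF : F ∈ 𝓕) (hG : G ∈ 𝓕) (hGF : G ⊂ F)
    (hadj : ¬ ∃ H ∈ 𝓕, G ⊂ H ∧ H ⊂ F) :
    (F \ G).ncard = 1 :=
  convexGeometry_adjacent_diff_singleton_general 𝓕 h𝓕 F G hF hG hGF hadj
end

section
/- Every Plott function with full support and at most single-valued choice arises from a linear order: if l is a Plott function on a finite set X with |l(A)| ≤ 1 for all A, then there is a subset S ⊆ X and a linear order on S such that for every A ⊆ X, l(A) is the best element of A ∩ S under that order (empty if A ∩ S = ∅). -/
open Set

variable {X Y Z : Type*}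

/-- every linear Plott function arises from a linear order on a subset. -/
theorem linear_plott_from_linear_order_on_subset {X : Type*} [Fintype X]
    (l : Set X → Set X) (hl : IsPlott l)
    (hlin : ∀ A : Set X, (l A).ncard ≤ 1) :
    ∃ (S : Set X) (r : X → X → Prop),
      (∀ a ∈ S, r a a) ∧
      (∀ a ∈ S, ∀ b ∈ S, ∀ c ∈ S, r a b → r b c → r a c) ∧
      (∀ a ∈ S, ∀ b ∈ S, r a b → r b a → a = b) ∧
      (∀ a ∈ S, ∀ b ∈ S, r a b ∨ r b a) ∧
      ∀ A : Set X, l A = {a | a ∈ A ∩ S ∧ ∀ b ∈ A ∩ S, r b a} := by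
  have hsingle : ∀ A : Set X, ∀ a ∈ l A, ∀ b ∈ l A, a = b := by
    intro A
    exact (Set.ncard_le_one (Set.toFinite _)).mp (hlin A)
  -- key consequence of path independence
  have hL1 : ∀ (A : Set X) (x : X), x ∈ A → l A = l (l A ∪ {x}) := by
    intro A x hx
    have h := hl.2 A {x}
    rwa [Set.union_eq_left.mpr (by simpa using hx)] at h
  have hLA : ∀ (A : Set X) (y : X), y ∈ l A → l A = {y} := by
    intro A y hy
    apply Set.eq_singleton_iff_unique_mem.mpr
    exact ⟨hy, fun z hz => hsingle A z hz y hy⟩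
  have hself : ∀ (A : Set X) (y : X), y ∈ l A → l {y} = {y} := by
    intro A y hy
    have h := hL1 A y (hl.1 A hy)
    rw [hLA A y hy] at h
    rw [Set.union_self] at h
    exact h.symm
  have hbeats : ∀ (A : Set X) (y : X), y ∈ l A → ∀ x ∈ A, l {x, y} = {y} := by
    intro A y hy x hx
    have h := hL1 A x hx
    rw [hLA A y hy] at h
    have hset : ({y} : Set X) ∪ {x} = {x, y} := by
      ext z; simp [Set.mem_insert_iff, or_comm]
    rw [hset] at h
    exact h.symm
  set S : Set X := {x | l {x} = {x}} with hS
  set r : X → X → Prop := fun x y => y ∈ l {x, y} with hr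
  have hnonempty : ∀ (A : Set X) (a : X), a ∈ A → a ∈ S → (l A).Nonempty := by
    intro A a haA haS
    by_contra h
    rw [Set.not_nonempty_iff_eq_empty] at h
    have h1 := hL1 A a haA
    rw [h, Set.empty_union, haS] at h1
    exact (Set.singleton_ne_empty a) h1.symm
  refine ⟨S, r, ?_, ?_, ?_, ?_, ?_⟩
  · -- refl
    intro a ha
    show a ∈ l {a, a}
    have : ({a, a} : Set X) = {a} := by simp
    rw [this, ha]
    exact rfl
  · -- trans
    intro a ha b hb c hc hab hbc
    show c ∈ l {a, c}
    by_cases hac : a = c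
    · subst hac
      have : ({a, a} : Set X) = {a} := by simp
      rw [this, ha]; exact rfl
    · obtain ⟨y, hy⟩ := hnonempty {a, c} a (by simp) ha
      have hy' : l {a, c} = {y} := hLA _ y hy
      have hy2 : y ∈ ({a, c} : Set X) := hl.1 _ hy
      rcases hy2 with h1 | h1
      · -- y = a : show this forces b = c
        rw [h1] at hy'
        have hab' : l {a, b} = {b} := hLA _ b hab
        have hbc' : l {b, c} = {c} := hLA _ c hbc
        have e1 : l ({a, b} ∪ {c}) = {c} := by
          rw [hl.2 {a, b} {c}, hab']
          have : ({b} : Set X) ∪ {c} = {b, c} := by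
            ext z; simp only [Set.mem_union, Set.mem_insert_iff, Set.mem_singleton_iff]; try tauto
          rw [this, hbc']
        have e2 : l ({a, c} ∪ {b}) = {b} := by
          rw [hl.2 {a, c} {b}, hy']
          have : ({a} : Set X) ∪ {b} = {a, b} := by
            ext z; simp only [Set.mem_union, Set.mem_insert_iff, Set.mem_singleton_iff]; try tauto
          rw [this, hab']
        have hsets : ({a, b} : Set X) ∪ {c} = {a, c} ∪ {b} := by
          ext z; simp only [Set.mem_union, Set.mem_insert_iff, Set.mem_singleton_iff]; tauto
        rw [hsets, e2] at e1
        have hbc2 : b = c := Set.singleton_eq_singleton_iff.mp e1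
        subst hbc2
        exact hab
      · rw [h1] at hy; exact hy
  · -- antisymm
    intro a _ b _ hab hba
    have h1 : b ∈ l {a, b} := hab
    have h2 : a ∈ l {b, a} := hba
    rw [Set.pair_comm b a] at h2
    exact hsingle _ a h2 b h1
  · -- total
    intro a ha b hb
    obtain ⟨y, hy⟩ := hnonempty {a, b} a (by simp) ha
    have hy2 : y ∈ ({a, b} : Set X) := hl.1 _ hy
    rcases hy2 with h1 | h1
    · right; show a ∈ l {b, a}; rw [Set.pair_comm b a]; exact h1 ▸ hy
    · left; show b ∈ l {a, b}; exact h1 ▸ hy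
  · -- the representation
    intro A
    apply Set.Subset.antisymm
    · intro y hy
      have hyA : y ∈ A := hl.1 A hy
      have hyS : y ∈ S := hself A y hy
      refine ⟨⟨hyA, hyS⟩, ?_⟩
      intro b hb
      show y ∈ l {b, y}
      rw [hbeats A y hy b hb.1]
      exact rfl
    · rintro a ⟨⟨haA, haS⟩, hall⟩
      obtain ⟨y, hy⟩ := hnonempty A a haA haS
      have hyA : y ∈ A := hl.1 A hy
      have hyS : y ∈ S := hself A y hy
      have h1 : a ∈ l {y, a} := hall y ⟨hyA, hyS⟩
      have h2 : l {a, y} = {y} := hbeats A y hy a haA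
      rw [Set.pair_comm y a, h2] at h1
      have hay : a = y := h1
      rw [hay]
      exact hy
end

section
/- The direct image of a linear Plott function is a linear Plott function: if φ: X → Y is a map of finite sets and l is a Plott function on X with |l(A)| ≤ 1 for all A ⊆ X, then φ_*(l)(B) = φ(l(φ^{-1}(B))) defines a Plott function on Y with |φ_*(l)(B)| ≤ 1 for all B ⊆ Y. -/
open Set

variable {X Y Z : Type*}

/-- Direct image of a choice function along `φ`. -/
def dimage (φ : X → Y) (f : Set X → Set X) : Set Y → Set Y :=
  fun B => φ '' f (φ ⁻¹' B)

/-- the direct image of a linear Plott function is a linear Plott function. -/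
theorem dimage_linear_plott {X Y : Type*} [Fintype X] [Fintype Y] (φ : X → Y)
    (l : Set X → Set X) (hl : IsPlott l)
    (hlin : ∀ A : Set X, (l A).ncard ≤ 1) :
    IsPlott (dimage φ l) ∧ ∀ B : Set Y, (dimage φ l B).ncard ≤ 1 := by
  obtain ⟨hc, hpi⟩ := hl
  -- outcast property
  have outcast : ∀ A B : Set X, l A ⊆ B → B ⊆ A → l B = l A := by
    intro A B h1 h2
    have hAB : A ∪ B = A := union_eq_self_of_subset_right h2
    have hlAB : l A ∪ B = B := union_eq_self_of_subset_left h1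
    have := hpi A B
    rw [hAB, hlAB] at this
    exact this.symm
  refine ⟨⟨?_, ?_⟩, ?_⟩
  · intro B y hy
    obtain ⟨x, hx, rfl⟩ := hy
    exact hc _ hx
  · intro A B
    unfold dimage
    set P := φ ⁻¹' A with hP
    set Q := φ ⁻¹' B with hQ
    have hpre : φ ⁻¹' (φ '' l P ∪ B) = φ ⁻¹' (φ '' l P) ∪ Q := by
      rw [preimage_union]
    rw [preimage_union, hpre]
    have hsub1 : φ ⁻¹' (φ '' l P) ⊆ P := by
      intro x hx
      obtain ⟨z, hz, hzx⟩ := hx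
      have : z ∈ P := hc _ hz
      simpa [hP, mem_preimage, hzx] using this
    have hsub2 : l P ⊆ φ ⁻¹' (φ '' l P) := subset_preimage_image φ _
    have key : l (φ ⁻¹' (φ '' l P) ∪ Q) = l (P ∪ Q) := outcast (P ∪ Q) (φ ⁻¹' (φ '' l P) ∪ Q) ?_ ?_
    · show φ '' l (P ∪ Q) = φ '' l (φ ⁻¹' (φ '' l P) ∪ Q)
      rw [key]
    · rw [hpi P Q]
      exact (hc _).trans (union_subset_union_left Q hsub2)
    · exact union_subset_union_left Q hsub1
  · intro B
    exact (Set.ncard_image_le (Set.toFinite _)).trans (hlin _)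
end

section
/- Projection formula: for a map φ: X → Y of finite sets and Plott functions f on X and g on Y, φ_*(f ∧ φ^*(g)) = φ_*(f) ∧ g, where ∧ denotes the meet in the lattice of Plott functions (the largest Plott function below both arguments) and φ^* is the inverse image (the largest Plott function h with φ_*(h) ≤ g). -/
/-!
The inclusion `⊆` is formal. For `⊇`, take a Plott function `h ≤ φ_* f` and `y₀ ∈ h B₀`; it
suffices to lift `h` to a Plott function `k ≤ f` with `φ_* k ≤ h` and `y₀ ∈ φ_* k B₀`, since
then `k ≤ f ∧ φ^* g`. The lift is a priority list: `k A` is the first listed element lying in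
`A`. The list is built greedily from the set `C` of elements not yet listed, always listing
next an element of `f C` that is either in a fibre already touched by the list, or maps into
`h (kernImage φ C)`; path independence of `f` and `h` guarantees that such an element exists,
and that one mapping to `y₀` becomes available before any element over `B₀` is forced.
-/

open Set

variable {X Y Z : Type*}

/-- Inverse image of a choice function: the join (pointwise union) of all Plott
functions whose direct image is pointwise below `g`. -/
def pinv (φ : X → Y) (g : Set Y → Set Y) : Set X → Set X :=
  fun A => {x | ∃ h : Set X → Set X, IsPlott h ∧
    (∀ B : Set Y, dimage φ h B ⊆ g B) ∧ x ∈ h A}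

/-- The meet of two choice functions in the lattice of Plott functions: the join
(pointwise union) of all Plott functions below both, which is the largest Plott
function below both. -/
def plottMeet (f g : Set X → Set X) : Set X → Set X :=
  fun A => {x | ∃ h : Set X → Set X, IsPlott h ∧
    (∀ B : Set X, h B ⊆ f B) ∧ (∀ B : Set X, h B ⊆ g B) ∧ x ∈ h A}

section Plott

variable {f h : Set X → Set X} {A B : Set X}

theorem IsPlott.chernoff (hf : IsPlott f) (hAB : A ⊆ B) : f B ∩ A ⊆ f A := by
  have hB : f B ⊆ f A ∪ (B \ A) := by
    calc f B = f (A ∪ (B \ A)) := by rw [union_sdiff_cancel hAB]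
      _ = f (f A ∪ (B \ A)) := hf.2 A (B \ A)
      _ ⊆ f A ∪ (B \ A) := hf.1 _
  rintro y ⟨hyB, hyA⟩
  exact (hB hyB).resolve_right fun hy => hy.2 hyA

theorem IsPlott.outcast (hf : IsPlott f) (hBA : f B ⊆ A) (hAB : A ⊆ B) : f A = f B := by
  calc f A = f (f B ∪ A) := by rw [union_eq_self_of_subset_left hBA]
    _ = f (B ∪ A) := (hf.2 B A).symm
    _ = f B := by rw [union_eq_self_of_subset_right hAB]

theorem isPlott_bot : IsPlott (fun _ : Set X => (∅ : Set X)) :=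
  ⟨fun A => empty_subset A, fun _ _ => rfl⟩

theorem IsPlott.le_plottMeet {g : Set X → Set X} (hh : IsPlott h) (hf : h ≤ f) (hg : h ≤ g) :
    h ≤ plottMeet f g :=
  fun _ _ hx => ⟨h, hh, hf, hg, hx⟩

open Classical in
def consChoice (x : X) (k : Set X → Set X) : Set X → Set X :=
  fun A => if x ∈ A then {x} else k A

theorem consChoice_of_mem {x : X} {k : Set X → Set X} (hx : x ∈ A) : consChoice x k A = {x} :=
  if_pos hx

theorem consChoice_of_notMem {x : X} {k : Set X → Set X} (hx : x ∉ A) : consChoice x k A = k A :=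
  if_neg hx

theorem IsPlott.consChoice {k : Set X → Set X} (hk : IsPlott k) (x : X) :
    IsPlott (consChoice x k) := by
  refine ⟨fun A => ?_, fun A B => ?_⟩
  · by_cases hxA : x ∈ A
    · rw [consChoice_of_mem hxA]; exact singleton_subset_iff.2 hxA
    · rw [consChoice_of_notMem hxA]; exact hk.1 A
  by_cases hxA : x ∈ A
  · rw [consChoice_of_mem hxA, consChoice_of_mem (mem_union_left B hxA),
      consChoice_of_mem (mem_union_left B (mem_singleton x))]
  rw [consChoice_of_notMem hxA]
  by_cases hxB : x ∈ B
  · rw [consChoice_of_mem (mem_union_right A hxB), consChoice_of_mem (mem_union_right _ hxB)]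
  · have hxkA : x ∉ k A := fun hx => hxA (hk.1 A hx)
    rw [consChoice_of_notMem (by simp [hxA, hxB]), consChoice_of_notMem (by simp [hxkA, hxB])]
    exact hk.2 A B

end Plott

section Image

variable {φ : X → Y} {f k : Set X → Set X} {g : Set Y → Set Y}

theorem dimage_mono (hfk : f ≤ k) : dimage φ f ≤ dimage φ k :=
  fun _ => image_mono (hfk _)

theorem IsPlott.le_pinv (hk : IsPlott k) (hkg : dimage φ k ≤ g) : k ≤ pinv φ g :=
  fun _ _ hx => ⟨k, hk, hkg, hx⟩

theorem IsPlott.dimage (hf : IsPlott f) : IsPlott (dimage φ f) := by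
  refine ⟨fun B => image_subset_iff.2 (hf.1 _), fun A B => ?_⟩
  change φ '' f (φ ⁻¹' (A ∪ B)) = φ '' f (φ ⁻¹' (φ '' f (φ ⁻¹' A) ∪ B))
  have hsat : f (φ ⁻¹' (φ '' f (φ ⁻¹' A)) ∪ φ ⁻¹' B) = f (φ ⁻¹' A ∪ φ ⁻¹' B) := by
    apply hf.outcast
    · rw [hf.2]
      exact (hf.1 _).trans (union_subset_union_left _ (subset_preimage_image φ _))
    · exact union_subset_union_left _ (preimage_mono (image_subset_iff.2 (hf.1 _)))
  rw [preimage_union, preimage_union, hsat]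

theorem dimage_pinv_le : dimage φ (pinv φ g) ≤ g := by
  rintro B _ ⟨x, ⟨h, -, hhg, hx⟩, rfl⟩
  exact hhg B (mem_image_of_mem φ hx)

end Image

section Lift

variable {φ : X → Y} {f k : Set X → Set X} {h : Set Y → Set Y} {C : Set X} {x : X}

theorem consChoice_le_of_mem_choice (hf : IsPlott f) (hx : x ∈ f C)
    (hk : ∀ A ⊆ C \ {x}, k A ⊆ f A) : ∀ A ⊆ C, consChoice x k A ⊆ f A := by
  intro A hA
  by_cases hxA : x ∈ A
  · rw [consChoice_of_mem hxA, singleton_subset_iff]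
    exact hf.chernoff hA ⟨hx, hxA⟩
  · rw [consChoice_of_notMem hxA]
    exact hk A fun z hz => ⟨hA hz, fun hzx => hxA (hzx ▸ hz)⟩

theorem dimage_consChoice_le (hh : IsPlott h)
    (hx : φ x ∈ kernImage φ C → φ x ∈ h (kernImage φ C))
    (hk : ∀ B, φ ⁻¹' B ⊆ C \ {x} → dimage φ k B ⊆ h B) :
    ∀ B, φ ⁻¹' B ⊆ C → dimage φ (consChoice x k) B ⊆ h B := by
  intro B hB
  by_cases hxB : x ∈ φ ⁻¹' B
  · have hBC : B ⊆ kernImage φ C := subset_kernImage_iff.2 hB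
    rw [dimage, consChoice_of_mem hxB, image_singleton, singleton_subset_iff]
    exact hh.chernoff hBC ⟨hx (hBC hxB), hxB⟩
  · rw [dimage, consChoice_of_notMem hxB]
    exact hk B fun z hz => ⟨hB hz, fun hzx => hxB (hzx ▸ hz)⟩

variable {B₀ : Set Y} {y₀ : Y}

/-- If `f C` avoids the touched fibres, outcast gives `f (φ ⁻¹' kernImage φ C) = f C`, so
`h (kernImage φ C) ⊆ φ '' f C`; either that set leaves `B₀`, or outcast for `h` gives
`h B₀ = h (kernImage φ C)` and `y₀` is available. -/
theorem exists_lift_step (hf : IsPlott f) (hh : IsPlott h)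
    (hhf : h ≤ dimage φ f) (hy₀ : y₀ ∈ h B₀) (hB₀ : φ ⁻¹' B₀ ⊆ C) :
    ∃ x ∈ f C, (φ x ∈ kernImage φ C → φ x ∈ h (kernImage φ C)) ∧ (φ x ∈ B₀ → φ x = y₀) := by
  set K := kernImage φ C
  have hB₀K : B₀ ⊆ K := subset_kernImage_iff.2 hB₀
  by_cases htouched : ∃ x ∈ f C, φ x ∉ K
  · obtain ⟨x, hx, hxK⟩ := htouched
    exact ⟨x, hx, fun h => absurd h hxK, fun h => absurd (hB₀K h) hxK⟩
  push Not at htouched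
  have hfK : f (φ ⁻¹' K) = f C :=
    hf.outcast htouched (subset_kernImage_iff.1 subset_rfl)
  have hhK : h K ⊆ φ '' f C := hfK ▸ hhf K
  by_cases hnew : ∃ v ∈ h K, v ∉ B₀
  · obtain ⟨v, hvK, hvB₀⟩ := hnew
    obtain ⟨x, hx, rfl⟩ := hhK hvK
    exact ⟨x, hx, fun _ => hvK, fun h => absurd h hvB₀⟩
  push Not at hnew
  have hy₀K : y₀ ∈ h K := hh.outcast hnew hB₀K ▸ hy₀
  obtain ⟨x, hx, hxy⟩ := hhK hy₀K
  exact ⟨x, hx, fun _ => hxy ▸ hy₀K, fun _ => hxy⟩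

theorem exists_lift_of_preimage_subset [Finite X] (hf : IsPlott f) (hh : IsPlott h)
    (hhf : h ≤ dimage φ f) (hy₀ : y₀ ∈ h B₀) (C : Set X) (hB₀ : φ ⁻¹' B₀ ⊆ C) :
    ∃ k, IsPlott k ∧ (∀ A ⊆ C, k A ⊆ f A) ∧
      (∀ B, φ ⁻¹' B ⊆ C → dimage φ k B ⊆ h B) ∧ y₀ ∈ dimage φ k B₀ := by
  induction C using WellFoundedLT.induction with
  | _ C ih =>
    obtain ⟨x, hx, hxh, hxy⟩ := exists_lift_step hf hh hhf hy₀ hB₀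
    by_cases hxB₀ : φ x ∈ B₀
    · refine ⟨consChoice x fun _ => ∅, isPlott_bot.consChoice x,
        consChoice_le_of_mem_choice hf hx fun _ _ => empty_subset _,
        dimage_consChoice_le hh hxh fun _ _ => by simp [dimage], ?_⟩
      rw [dimage, consChoice_of_mem (show x ∈ φ ⁻¹' B₀ from hxB₀), image_singleton, hxy hxB₀]
      exact mem_singleton y₀
    · have hB₀x : φ ⁻¹' B₀ ⊆ C \ {x} := fun z hz => ⟨hB₀ hz, fun hzx => hxB₀ (hzx ▸ hz)⟩
      obtain ⟨k, hk, hkf, hkh, hky⟩ := ih _ (sdiff_singleton_ssubset.2 (hf.1 C hx)) hB₀x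
      refine ⟨consChoice x k, hk.consChoice x, consChoice_le_of_mem_choice hf hx hkf,
        dimage_consChoice_le hh hxh hkh, ?_⟩
      rwa [dimage, consChoice_of_notMem (show x ∉ φ ⁻¹' B₀ from hxB₀)]

end Lift

theorem projection_formula_general {X Y : Type*} [Fintype X] (φ : X → Y)
    (f : Set X → Set X) (hf : IsPlott f)
    (g : Set Y → Set Y) :
    dimage φ (plottMeet f (pinv φ g)) = plottMeet (dimage φ f) g := by
  funext B₀
  ext y₀
  constructor
  · rintro ⟨x, ⟨k, hk, hkf, hkg, hx⟩, rfl⟩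
    exact hk.dimage.le_plottMeet (dimage_mono hkf) ((dimage_mono hkg).trans dimage_pinv_le) B₀
      (mem_image_of_mem φ hx)
  · rintro ⟨h, hh, hhf, hhg, hy₀⟩
    obtain ⟨k, hk, hkf, hkh, hky⟩ :=
      exists_lift_of_preimage_subset hf hh hhf hy₀ univ (subset_univ _)
    have hkg : k ≤ pinv φ g := hk.le_pinv fun B => (hkh B (subset_univ _)).trans (hhg B)
    exact dimage_mono (hk.le_plottMeet (fun A => hkf A (subset_univ A)) hkg) B₀ hky

/-- the projection formula `φ_*(f ∧ φ^*(g)) = φ_*(f) ∧ g`. -/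
theorem projection_formula {X Y : Type*} [Fintype X] [Fintype Y] (φ : X → Y)
    (f : Set X → Set X) (hf : IsPlott f)
    (g : Set Y → Set Y) (hg : IsPlott g) :
    dimage φ (plottMeet f (pinv φ g)) = plottMeet (dimage φ f) g :=
  projection_formula_general φ f hf g
end
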